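/- arXiv:1612.05440 — 2 statements merged into one kernel-verified Lean document; each statement's English description precedes it below -/
import Mathlib

section
/- Let 𝒢 = (G_1, …, G_τ) be a graph history on a finite vertex set V with |V| = n, and let S_0 = V, S_1, …, S_{n−1} be any score_a peeling sequence. Then max_{0 ≤ i ≤ n−1} f_aa(S_i, 𝒢) ≥ (1/2) · max_{∅ ≠ S ⊆ V} f_aa(S, 𝒢); that is, the greedy minimum-average-degree peeling (the FindBFF_A algorithm) is a 1/2-approximation algorithm for the BFF-aa problem. -/
open scoped Classical
open Finset

/-- The degree of `u` in the subgraph of `G` induced by the vertex set `S`. -/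
noncomputable def degIn {n : ℕ} (G : SimpleGraph (Fin n)) (S : Finset (Fin n)) (u : Fin n) : ℕ :=
  (S.filter fun v => G.Adj u v).card

/-- The number of edges of the subgraph of `G` induced by `S`. -/
noncomputable def edgesIn {n : ℕ} (G : SimpleGraph (Fin n)) (S : Finset (Fin n)) : ℕ :=
  ((S ×ˢ S).filter fun p => p.1 < p.2 ∧ G.Adj p.1 p.2).card

/-- Minimum density `d_m(S, G)`: the minimum degree in the induced subgraph `G[S]`. -/
noncomputable def minDensity {n : ℕ} (G : SimpleGraph (Fin n)) (S : Finset (Fin n)) : ℕ :=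
  sInf ((fun u => degIn G S u) '' (S : Set (Fin n)))

/-- Average density `d_a(S, G) = 2·|E(G[S])| / |S|`. -/
noncomputable def avgDensity {n : ℕ} (G : SimpleGraph (Fin n)) (S : Finset (Fin n)) : ℝ :=
  2 * (edgesIn G S : ℝ) / (S.card : ℝ)

/-- `f_mm(S, 𝒢) = min_t d_m(S, G_t)`. -/
noncomputable def fmm {n τ : ℕ} (G : Fin τ → SimpleGraph (Fin n)) (S : Finset (Fin n)) : ℕ :=
  sInf (Set.range fun t => minDensity (G t) S)

/-- `f_am(S, 𝒢) = (1/τ) · Σ_t d_m(S, G_t)`. -/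
noncomputable def fam {n τ : ℕ} (G : Fin τ → SimpleGraph (Fin n)) (S : Finset (Fin n)) : ℝ :=
  (1 / (τ : ℝ)) * ∑ t, (minDensity (G t) S : ℝ)

/-- `f_ma(S, 𝒢) = min_t d_a(S, G_t)`. -/
noncomputable def fma {n τ : ℕ} (G : Fin τ → SimpleGraph (Fin n)) (S : Finset (Fin n)) : ℝ :=
  sInf (Set.range fun t => avgDensity (G t) S)

/-- `f_aa(S, 𝒢) = (1/τ) · Σ_t d_a(S, G_t)`. -/
noncomputable def faa {n τ : ℕ} (G : Fin τ → SimpleGraph (Fin n)) (S : Finset (Fin n)) : ℝ :=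
  (1 / (τ : ℝ)) * ∑ t, avgDensity (G t) S

/-- `score_m(v, 𝒢[S]) = min_t degree(v, G_t[S])`. -/
noncomputable def scoreM {n τ : ℕ} (G : Fin τ → SimpleGraph (Fin n)) (S : Finset (Fin n))
    (v : Fin n) : ℕ :=
  sInf (Set.range fun t => degIn (G t) S v)

/-- `score_a(v, 𝒢[S]) = (1/τ) · Σ_t degree(v, G_t[S])`. -/
noncomputable def scoreA {n τ : ℕ} (G : Fin τ → SimpleGraph (Fin n)) (S : Finset (Fin n))
    (v : Fin n) : ℝ :=
  (1 / (τ : ℝ)) * ∑ t, (degIn (G t) S v : ℝ)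

/-- A `score_m` peeling sequence: `S 0 = V`, and at each step the removed vertex `v i`
minimizes `score_m` over the current set. -/
def IsScoreMPeeling {n τ : ℕ} (G : Fin τ → SimpleGraph (Fin n)) (S : ℕ → Finset (Fin n))
    (v : ℕ → Fin n) : Prop :=
  S 0 = Finset.univ ∧
    ∀ i < n - 1, v i ∈ S i ∧ S (i + 1) = S i \ {v i} ∧
      ∀ u ∈ S i, scoreM G (S i) (v i) ≤ scoreM G (S i) u

/-- A `score_a` peeling sequence: `S 0 = V`, and at each step the removed vertex `v i`
minimizes `score_a` over the current set. -/
def IsScoreAPeeling {n τ : ℕ} (G : Fin τ → SimpleGraph (Fin n)) (S : ℕ → Finset (Fin n))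
    (v : ℕ → Fin n) : Prop :=
  S 0 = Finset.univ ∧
    ∀ i < n - 1, v i ∈ S i ∧ S (i + 1) = S i \ {v i} ∧
      ∀ u ∈ S i, scoreA G (S i) (v i) ≤ scoreA G (S i) u

section Helpers
variable {n τ : ℕ}

lemma degIn_mono (G : SimpleGraph (Fin n)) {S T : Finset (Fin n)} (h : S ⊆ T) (u : Fin n) :
    degIn G S u ≤ degIn G T u :=
  Finset.card_le_card (Finset.filter_subset_filter _ h)

lemma scoreA_mono (G : Fin τ → SimpleGraph (Fin n)) {S T : Finset (Fin n)} (h : S ⊆ T)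
    (u : Fin n) : scoreA G S u ≤ scoreA G T u := by
  unfold scoreA
  apply mul_le_mul_of_nonneg_left _ (by positivity)
  exact Finset.sum_le_sum fun t _ => Nat.cast_le.mpr (degIn_mono (G t) h u)

lemma handshake (G : SimpleGraph (Fin n)) (S : Finset (Fin n)) :
    ∑ u ∈ S, degIn G S u = 2 * edgesIn G S := by
  have h1 : ∑ u ∈ S, degIn G S u = ((S ×ˢ S).filter fun p => G.Adj p.1 p.2).card := by
    simp only [degIn, Finset.card_filter]
    rw [Finset.sum_product]
  have hsplit : ((S ×ˢ S).filter fun p => G.Adj p.1 p.2)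
      = ((S ×ˢ S).filter fun p => p.1 < p.2 ∧ G.Adj p.1 p.2)
        ∪ ((S ×ˢ S).filter fun p => p.2 < p.1 ∧ G.Adj p.1 p.2) := by
    rw [← Finset.filter_or]
    apply Finset.filter_congr
    intro p _
    constructor
    · intro ha
      rcases lt_or_gt_of_ne ha.ne with h | h
      · exact Or.inl ⟨h, ha⟩
      · exact Or.inr ⟨h, ha⟩
    · rintro (⟨_, ha⟩ | ⟨_, ha⟩) <;> exact ha
  have hdisj : Disjoint ((S ×ˢ S).filter fun p => p.1 < p.2 ∧ G.Adj p.1 p.2)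
      ((S ×ˢ S).filter fun p => p.2 < p.1 ∧ G.Adj p.1 p.2) := by
    apply Finset.disjoint_filter_filter'
    rw [disjoint_iff_inf_le]
    rintro p ⟨h1, h2⟩
    exact absurd h2.1 (not_lt_of_gt h1.1)
  have hswap : ((S ×ˢ S).filter fun p => p.2 < p.1 ∧ G.Adj p.1 p.2).card
      = ((S ×ˢ S).filter fun p => p.1 < p.2 ∧ G.Adj p.1 p.2).card := by
    apply Finset.card_bij (fun p _ => p.swap)
    · rintro ⟨a, b⟩ hp
      simp only [Finset.mem_filter, Finset.mem_product] at hp ⊢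
      exact ⟨⟨hp.1.2, hp.1.1⟩, hp.2.1, hp.2.2.symm⟩
    · rintro ⟨a, b⟩ _ ⟨c, d⟩ _ h
      simpa [Prod.ext_iff, and_comm] using h
    · rintro ⟨a, b⟩ hp
      refine ⟨(b, a), ?_, rfl⟩
      simp only [Finset.mem_filter, Finset.mem_product] at hp ⊢
      exact ⟨⟨hp.1.2, hp.1.1⟩, hp.2.1, hp.2.2.symm⟩
  rw [h1, hsplit, Finset.card_union_of_disjoint hdisj, hswap, edgesIn, two_mul]

lemma edgesIn_erase_le (G : SimpleGraph (Fin n)) (S : Finset (Fin n)) (x : Fin n) :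
    edgesIn G S ≤ edgesIn G (S.erase x) + degIn G S x := by
  classical
  set F := (S ×ˢ S).filter fun p => p.1 < p.2 ∧ G.Adj p.1 p.2 with hF
  have hsplit : (F.filter fun p => p.1 = x ∨ p.2 = x).card
      + (F.filter fun p => ¬(p.1 = x ∨ p.2 = x)).card = F.card :=
    Finset.card_filter_add_card_filter_not _
  have h2 : (F.filter fun p => ¬(p.1 = x ∨ p.2 = x)).card ≤ edgesIn G (S.erase x) := by
    apply Finset.card_le_card
    rintro ⟨a, b⟩ hp
    simp only [hF, Finset.mem_filter, Finset.mem_product, Finset.mem_erase, not_or] at hp ⊢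
    exact ⟨⟨⟨hp.2.1, hp.1.1.1⟩, hp.2.2, hp.1.1.2⟩, hp.1.2⟩
  have h1 : (F.filter fun p => p.1 = x ∨ p.2 = x).card ≤ degIn G S x := by
    apply Finset.card_le_card_of_injOn (fun p => if p.1 = x then p.2 else p.1)
    · rintro ⟨a, b⟩ hp
      simp only [hF, Finset.coe_filter, Set.mem_setOf_eq, Finset.mem_coe, Finset.mem_filter, Finset.mem_product] at hp
      obtain ⟨⟨⟨ha, hb⟩, hlt, hadj⟩, hor⟩ := hp
      simp only [Finset.coe_filter, Set.mem_setOf_eq, Finset.mem_coe, Finset.mem_filter]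
      by_cases h : a = x
      · simp only [h, if_pos rfl]
        exact ⟨hb, h ▸ hadj⟩
      · simp only [if_neg h]
        rcases hor with h' | h'
        · exact absurd h' h
        · exact ⟨ha, h' ▸ hadj.symm⟩
    · rintro ⟨a, b⟩ hp ⟨c, d⟩ hq h
      simp only [hF, Finset.coe_filter, Set.mem_setOf_eq, Finset.mem_filter,
        Finset.mem_product] at hp hq
      obtain ⟨⟨⟨ha, hb⟩, hltp, hadjp⟩, horp⟩ := hp
      obtain ⟨⟨⟨hc, hd⟩, hltq, hadjq⟩, horq⟩ := hq
      dsimp only at h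
      by_cases hax : a = x <;> by_cases hcx : c = x
      · rw [if_pos hax, if_pos hcx] at h
        subst hax; subst hcx; subst h; rfl
      · rw [if_pos hax, if_neg hcx] at h
        rcases horq with h' | h'
        · exact absurd h' hcx
        · exfalso; subst hax; subst h'; subst h
          exact absurd (hltp.trans hltq) (lt_irrefl _)
      · rw [if_neg hax, if_pos hcx] at h
        rcases horp with h' | h'
        · exact absurd h' hax
        · exfalso; subst hcx; subst h'; subst h
          exact absurd (hltq.trans hltp) (lt_irrefl _)
      · rw [if_neg hax, if_neg hcx] at h
        rcases horp with h' | h'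
        · exact absurd h' hax
        · rcases horq with h'' | h''
          · exact absurd h'' hcx
          · subst h; subst h'; subst h''; rfl
  calc edgesIn G S = F.card := rfl
    _ = _ + _ := hsplit.symm
    _ ≤ degIn G S x + edgesIn G (S.erase x) := Nat.add_le_add h1 h2
    _ = _ := Nat.add_comm _ _

lemma faa_nonneg (G : Fin τ → SimpleGraph (Fin n)) (S : Finset (Fin n)) : 0 ≤ faa G S := by
  unfold faa avgDensity
  positivity

lemma faa_eq_avg_scoreA (G : Fin τ → SimpleGraph (Fin n)) (S : Finset (Fin n)) :
    faa G S = (1 / (S.card : ℝ)) * ∑ u ∈ S, scoreA G S u := by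
  have key : ∀ t : Fin τ, (2:ℝ) * (edgesIn (G t) S : ℝ) = ∑ u ∈ S, (degIn (G t) S u : ℝ) := by
    intro t
    exact_mod_cast (handshake (G t) S).symm
  unfold faa scoreA avgDensity
  conv_rhs => rw [← Finset.mul_sum, Finset.sum_comm]
  conv_lhs => rw [← Finset.sum_div]
  have hs : ∑ t : Fin τ, (2:ℝ) * (edgesIn (G t) S : ℝ)
      = ∑ t : Fin τ, ∑ u ∈ S, (degIn (G t) S u : ℝ) :=
    Finset.sum_congr rfl fun t _ => key t
  rw [hs]
  ring

lemma faa_singleton (G : Fin τ → SimpleGraph (Fin n)) (x : Fin n) : faa G {x} = 0 := by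
  have h0 : ∀ t : Fin τ, edgesIn (G t) ({x} : Finset (Fin n)) = 0 := by
    intro t
    simp [edgesIn, Finset.singleton_product_singleton, Finset.filter_singleton]
  simp [faa, avgDensity, h0]

lemma scoreA_nonneg (G : Fin τ → SimpleGraph (Fin n)) (S : Finset (Fin n)) (x : Fin n) :
    0 ≤ scoreA G S x := by
  unfold scoreA; positivity

/-- Key local bound: at a maximizer, every vertex has score at least half the density. -/
lemma max_vertex_bound (hτ : 0 < τ) (G : Fin τ → SimpleGraph (Fin n)) {Sst : Finset (Fin n)}
    (hmax : ∀ S' : Finset (Fin n), S'.Nonempty → faa G S' ≤ faa G Sst)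
    {x : Fin n} (hx : x ∈ Sst) : faa G Sst ≤ 2 * scoreA G Sst x := by
  rcases eq_or_lt_of_le (Finset.one_le_card.mpr ⟨x, hx⟩) with h1 | h2
  · obtain ⟨y, hy⟩ := Finset.card_eq_one.mp h1.symm
    rw [hy, faa_singleton]
    exact mul_nonneg (by norm_num) (scoreA_nonneg G _ x)
  · set T := Sst.erase x with hT
    have hcT : T.card = Sst.card - 1 := Finset.card_erase_of_mem hx
    have hTne : T.Nonempty := Finset.card_pos.mp (by omega)
    have hfle := hmax T hTne
    set K : ℝ := (Sst.card : ℝ) with hK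
    have hK2 : (2 : ℝ) ≤ K := by
      have h2' : (2:ℕ) ≤ Sst.card := h2
      rw [hK]
      exact_mod_cast h2'
    have hK0 : (0 : ℝ) < K := by linarith
    have hK1 : (0 : ℝ) < K - 1 := by linarith
    have hτ0 : (0 : ℝ) < (τ : ℝ) := by exact_mod_cast hτ
    set E : ℝ := ∑ t, (edgesIn (G t) Sst : ℝ) with hE
    set E' : ℝ := ∑ t, (edgesIn (G t) T : ℝ) with hE'
    set D : ℝ := ∑ t, (degIn (G t) Sst x : ℝ) with hD
    have hED : E ≤ E' + D := by
      rw [hE, hE', hD, ← Finset.sum_add_distrib]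
      apply Finset.sum_le_sum
      intro t _
      exact_mod_cast edgesIn_erase_le (G t) Sst x
    have hfaaS : faa G Sst = (1 / (τ : ℝ)) * (2 * E / K) := by
      unfold faa avgDensity
      rw [← Finset.sum_div, ← Finset.mul_sum, hE, hK]
    have hcT' : ((T.card : ℝ)) = K - 1 := by
      rw [hcT, hK, Nat.cast_sub (by omega : 1 ≤ Sst.card)]
      norm_num
    have hfaaT : faa G T = (1 / (τ : ℝ)) * (2 * E' / (K - 1)) := by
      unfold faa avgDensity
      rw [← Finset.sum_div, ← Finset.mul_sum, hE', hcT']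
    have hscore : scoreA G Sst x = (1 / (τ : ℝ)) * D := by
      unfold scoreA
      rw [hD]
    have hmain : 2 * E' / (K - 1) ≤ 2 * E / K := by
      rw [hfaaT, hfaaS] at hfle
      have hτ' : (0:ℝ) < 1 / (τ : ℝ) := by positivity
      exact le_of_mul_le_mul_left hfle hτ'
    have h3 : 2 * (E - D) / (K - 1) ≤ 2 * E' / (K - 1) := by
      gcongr
      linarith
    have h4 := h3.trans hmain
    rw [div_le_div_iff₀ hK1 hK0] at h4
    have hEKD : E ≤ K * D := by nlinarith
    have final : 2 * E / K ≤ 2 * D := by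
      rw [div_le_iff₀ hK0]
      nlinarith
    rw [hfaaS, hscore]
    calc (1 / (τ:ℝ)) * (2 * E / K) ≤ (1 / (τ:ℝ)) * (2 * D) :=
          mul_le_mul_of_nonneg_left final (by positivity)
      _ = 2 * ((1 / (τ:ℝ)) * D) := by ring


end Helpers

/-- The greedy minimum-average-degree peeling (the `FindBFF_A` algorithm) is a
`1/2`-approximation algorithm for the BFF-aa problem: the maximum of `f_aa` over the peeling
chain is at least half the maximum of `f_aa` over all nonempty subsets of `V`. -/
theorem findBffA_half_approx_for_bff_aa {n τ : ℕ} (hn : 0 < n) (hτ : 0 < τ)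
    (G : Fin τ → SimpleGraph (Fin n)) (S : ℕ → Finset (Fin n)) (v : ℕ → Fin n)
    (hpeel : IsScoreAPeeling G S v) :
    ∃ i < n, (S i).Nonempty ∧
      ∀ S' : Finset (Fin n), S'.Nonempty → (1 / 2) * faa G S' ≤ faa G (S i) := by
  obtain ⟨h0, hstep⟩ := hpeel
  have hcard : ∀ i ≤ n - 1, (S i).card = n - i := by
    intro i hi
    induction i with
    | zero => simp [h0]
    | succ j ih =>
      have hj : j < n - 1 := by omega
      obtain ⟨hv, hSj, -⟩ := hstep j hj
      have hcj := ih (by omega)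
      rw [hSj, Finset.sdiff_singleton_eq_erase, Finset.card_erase_of_mem hv, hcj]
      omega
  -- the maximizer of faa over nonempty sets
  haveI : Nonempty (Fin n) := ⟨⟨0, hn⟩⟩
  obtain ⟨Sst, hSstmem, hSstmax⟩ :=
    Finset.exists_max_image ((Finset.univ : Finset (Finset (Fin n))).filter fun A => A.Nonempty)
      (faa G) ⟨Finset.univ, by simp [Finset.univ_nonempty]⟩
  have hSstne : Sst.Nonempty := (Finset.mem_filter.mp hSstmem).2
  have hmax : ∀ S' : Finset (Fin n), S'.Nonempty → faa G S' ≤ faa G Sst := by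
    intro S' hS'
    exact hSstmax S' (Finset.mem_filter.mpr ⟨Finset.mem_univ _, hS'⟩)
  by_cases hall : ∀ j ≤ n - 1, Sst ⊆ S j
  · -- Sst is a singleton; faa Sst = 0
    have hc1 : (S (n-1)).card = 1 := by rw [hcard (n-1) le_rfl]; omega
    have hSstc : Sst.card = 1 := by
      have := Finset.card_le_card (hall (n-1) le_rfl)
      have := Finset.one_le_card.mpr hSstne
      omega
    obtain ⟨y, hy⟩ := Finset.card_eq_one.mp hSstc
    have hfz : faa G Sst = 0 := by rw [hy, faa_singleton]
    refine ⟨0, hn, by rw [h0]; exact Finset.univ_nonempty, ?_⟩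
    intro S' hS'
    have h1 := hmax S' hS'
    have h2 := faa_nonneg G (S 0)
    rw [hfz] at h1
    linarith
  · push_neg at hall
    obtain ⟨j, hjle, hjnot⟩ := hall
    have hP : ∃ m, ¬ Sst ⊆ S m := ⟨j, hjnot⟩
    have hj0spec : ¬ Sst ⊆ S (Nat.find hP) := Nat.find_spec hP
    have hj0le : Nat.find hP ≤ j := Nat.find_min' hP hjnot
    have hj0pos : 0 < Nat.find hP := by
      rcases Nat.eq_zero_or_pos (Nat.find hP) with h | h
      · exfalso; apply hj0spec; rw [h, h0]; exact Finset.subset_univ _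
      · exact h
    set i := Nat.find hP - 1 with hi
    have hilt : i < n - 1 := by omega
    have hsub : Sst ⊆ S i := not_not.mp (Nat.find_min hP (by omega))
    obtain ⟨hvmem, hSi1, hmin⟩ := hstep i hilt
    have hvi : v i ∈ Sst := by
      by_contra hvn
      apply hj0spec
      have hji : Nat.find hP = i + 1 := by omega
      rw [hji, hSi1]
      intro a ha
      rw [Finset.mem_sdiff]
      refine ⟨hsub ha, ?_⟩
      simp only [Finset.mem_singleton]
      rintro rfl
      exact hvn ha
    have hSine : (S i).Nonempty := by
      rw [← Finset.card_pos, hcard i (by omega)]; omega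
    refine ⟨i, by omega, hSine, ?_⟩
    intro S' hS'
    have h1 : faa G Sst ≤ 2 * scoreA G Sst (v i) := max_vertex_bound hτ G hmax hvi
    have h2 : scoreA G Sst (v i) ≤ scoreA G (S i) (v i) := scoreA_mono G hsub _
    have h3 : ∀ u ∈ S i, faa G Sst ≤ 2 * scoreA G (S i) u := by
      intro u hu
      have := hmin u hu
      linarith
    have hc0 : (0:ℝ) < ((S i).card : ℝ) := by
      exact_mod_cast Finset.card_pos.mpr hSine
    have hsum : ((S i).card : ℝ) * faa G Sst ≤ 2 * ∑ u ∈ S i, scoreA G (S i) u := by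
      have hss := Finset.sum_le_sum h3
      rw [Finset.sum_const, nsmul_eq_mul, ← Finset.mul_sum] at hss
      exact hss
    have h6 : (1/2) * faa G Sst ≤ faa G (S i) := by
      rw [faa_eq_avg_scoreA G (S i),
        show (1/(((S i).card):ℝ)) * ∑ u ∈ S i, scoreA G (S i) u
          = (∑ u ∈ S i, scoreA G (S i) u) / (((S i).card):ℝ) from by ring,
        le_div_iff₀ hc0]
      nlinarith
    have h7 := hmax S' hS'
    linarith
end

section
/- For every pair of integers n ≥ 4 and τ ≥ 2 there exists a graph history 𝒢 = (G_1, …, G_τ) on an n-element vertex set V such that: (1) every score_m peeling sequence S_0 = V, S_1, …, S_{n−1} satisfies max_{0 ≤ i ≤ n−1} f_am(S_i, 𝒢) ≤ 1; and (2) there exists a nonempty S* ⊆ V with f_am(S*, 𝒢) = (n−2)·(τ−1)/τ. Consequently, the approximation ratio of the FindBFF_M algorithm for the BFF-am problem is O(1/n). (The instance: the first τ−1 snapshots consist of a clique on n−1 vertices together with one extra vertex v joined to a single clique vertex u; the last snapshot contains only the edge {u,v}.) -/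
open scoped Classical
open Finset

/-!
In every snapshot the pendant vertex `v` has at most one neighbour, `u`, so every set containing
`v` has `f_am ≤ 1`. The snapshot `t₀` consisting of the single edge `uv` gives every other vertex
score `0`, while `u` and `v` keep score `≥ 1` as long as both survive; hence a `score_m` peeling
removes all other vertices first and keeps `v` until only two vertices remain, after which it
reaches a singleton. Meanwhile the clique `V \ {v}` has minimum degree `n - 2` in all snapshots
but `t₀`.
-/

section Density

variable {n : ℕ}

lemma degIn_le_one_of_unique_neighbor {G : SimpleGraph (Fin n)} {a c : Fin n}
    (h : ∀ b, G.Adj a b → b = c) (S : Finset (Fin n)) : degIn G S a ≤ 1 :=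
  (card_le_card fun b hb => mem_singleton.2 (h b (mem_filter.1 hb).2)).trans
    (card_singleton c).le

lemma degIn_pos {G : SimpleGraph (Fin n)} {S : Finset (Fin n)} {a b : Fin n} (hb : b ∈ S)
    (hab : G.Adj a b) : 0 < degIn G S a :=
  card_pos.2 ⟨b, mem_filter.2 ⟨hb, hab⟩⟩

lemma degIn_eq_zero {G : SimpleGraph (Fin n)} {S : Finset (Fin n)} {a : Fin n}
    (h : ∀ b ∈ S, ¬G.Adj a b) : degIn G S a = 0 :=
  card_eq_zero.2 (filter_eq_empty_iff.2 h)

lemma degIn_singleton_self (G : SimpleGraph (Fin n)) (a : Fin n) : degIn G {a} a = 0 :=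
  degIn_eq_zero fun b hb => by rw [mem_singleton.1 hb]; exact G.irrefl

lemma minDensity_le_degIn {G : SimpleGraph (Fin n)} {S : Finset (Fin n)} {a : Fin n}
    (ha : a ∈ S) : minDensity G S ≤ degIn G S a :=
  Nat.sInf_le ⟨a, ha, rfl⟩

lemma minDensity_eq_of_forall_degIn_eq {G : SimpleGraph (Fin n)} {S : Finset (Fin n)} {k : ℕ}
    (hS : S.Nonempty) (h : ∀ a ∈ S, degIn G S a = k) : minDensity G S = k := by
  obtain ⟨a, ha⟩ := hS
  refine le_antisymm ((minDensity_le_degIn ha).trans (h a ha).le) ?_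
  exact le_csInf ⟨_, a, ha, rfl⟩ (by rintro _ ⟨b, hb, rfl⟩; exact (h b hb).ge)

variable {τ : ℕ}

lemma fam_le_of_degIn_le {G : Fin τ → SimpleGraph (Fin n)} {S : Finset (Fin n)} {a : Fin n}
    {k : ℕ} (ha : a ∈ S) (h : ∀ t, degIn (G t) S a ≤ k) : fam G S ≤ k := by
  calc fam G S ≤ 1 / (τ : ℝ) * ∑ _t : Fin τ, (k : ℝ) := by
        refine mul_le_mul_of_nonneg_left (sum_le_sum fun t _ => ?_) (by positivity)
        exact_mod_cast (minDensity_le_degIn ha).trans (h t)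
    _ = 1 / (τ : ℝ) * τ * k := by simp [mul_assoc]
    _ ≤ k := by
        refine mul_le_of_le_one_left (Nat.cast_nonneg k) ?_
        rcases Nat.eq_zero_or_pos τ with rfl | hτ
        · simp
        · rw [one_div_mul_cancel (by positivity)]

lemma fam_eq_of_minDensity_eq {G : Fin τ → SimpleGraph (Fin n)} {S : Finset (Fin n)} {k : ℕ}
    (t₀ : Fin τ) (h₀ : minDensity (G t₀) S = 0) (h : ∀ t ≠ t₀, minDensity (G t) S = k) :
    fam G S = ((τ : ℝ) - 1) * k / τ := by
  rw [fam, ← sum_erase_add _ _ (mem_univ t₀), h₀,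
    sum_congr rfl fun t ht => by rw [h t (ne_of_mem_erase ht)], sum_const,
    card_erase_of_mem (mem_univ _), card_univ, Fintype.card_fin, nsmul_eq_mul,
    Nat.cast_pred t₀.pos]
  ring

lemma scoreM_le_degIn (G : Fin τ → SimpleGraph (Fin n)) (S : Finset (Fin n)) (a : Fin n)
    (t : Fin τ) : scoreM G S a ≤ degIn (G t) S a :=
  Nat.sInf_le ⟨t, rfl⟩

lemma scoreM_pos [Nonempty (Fin τ)] {G : Fin τ → SimpleGraph (Fin n)} {S : Finset (Fin n)}
    {a b : Fin n} (hb : b ∈ S) (h : ∀ t, (G t).Adj a b) : 0 < scoreM G S a :=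
  le_csInf (Set.range_nonempty _) (by rintro _ ⟨t, rfl⟩; exact Nat.succ_le_of_lt (degIn_pos hb (h t)))

end Density

namespace IsScoreMPeeling

variable {n τ : ℕ} {G : Fin τ → SimpleGraph (Fin n)} {S : ℕ → Finset (Fin n)} {v : ℕ → Fin n}

lemma card_eq (hP : IsScoreMPeeling G S v) : ∀ i ≤ n - 1, (S i).card = n - i
  | 0, _ => by rw [hP.1, card_univ, Fintype.card_fin, Nat.sub_zero]
  | i + 1, hi => by
    obtain ⟨hv, hS, -⟩ := hP.2 i (by omega)
    rw [hS, card_sdiff_of_subset (singleton_subset_iff.2 hv), card_singleton,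
      hP.card_eq i (by omega)]
    omega

lemma mem_succ (hP : IsScoreMPeeling G S v) {i : ℕ} (hi : i < n - 1) {a b : Fin n}
    (ha : a ∈ S i) (hb : b ∈ S i) (hlt : scoreM G (S i) b < scoreM G (S i) a) :
    a ∈ S (i + 1) := by
  obtain ⟨-, hS, hmin⟩ := hP.2 i hi
  rw [hS, mem_sdiff, mem_singleton]
  refine ⟨ha, ?_⟩
  rintro rfl
  exact absurd (hmin b hb) (not_le.2 hlt)

end IsScoreMPeeling

section Construction

variable {n τ : ℕ}

def cliqueWithPendant (u v : Fin n) : SimpleGraph (Fin n) :=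
  SimpleGraph.fromRel (fun a b => a ≠ v ∧ b ≠ v) ⊔ SimpleGraph.edge u v

def cliquePendantHistory (t₀ : Fin τ) (u v : Fin n) : Fin τ → SimpleGraph (Fin n) :=
  Function.update (fun _ => cliqueWithPendant u v) t₀ (SimpleGraph.edge u v)

variable {t₀ : Fin τ} {u v : Fin n}

lemma eq_of_cliquePendantHistory_adj_pendant {t : Fin τ} {b : Fin n}
    (h : (cliquePendantHistory t₀ u v t).Adj v b) : b = u := by
  unfold cliquePendantHistory at h
  rcases eq_or_ne t t₀ with rfl | ht
  · rw [Function.update_self, SimpleGraph.edge_adj] at h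
    tauto
  · rw [Function.update_of_ne ht] at h
    simp only [cliqueWithPendant, SimpleGraph.sup_adj, SimpleGraph.fromRel_adj,
      SimpleGraph.edge_adj] at h
    tauto

lemma cliquePendantHistory_adj (huv : u ≠ v) (t : Fin τ) :
    (cliquePendantHistory t₀ u v t).Adj u v := by
  have hedge : (SimpleGraph.edge u v).Adj u v := (SimpleGraph.edge_adj u v u v).2 ⟨by simp, huv⟩
  unfold cliquePendantHistory
  rcases eq_or_ne t t₀ with rfl | ht
  · rwa [Function.update_self]
  · rw [Function.update_of_ne ht]
    exact SimpleGraph.sup_adj _ _ _ _ |>.2 (Or.inr hedge)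

lemma scoreM_cliquePendantHistory_eq_zero (S : Finset (Fin n)) {w : Fin n} (hwu : w ≠ u)
    (hwv : w ≠ v) : scoreM (cliquePendantHistory t₀ u v) S w = 0 := by
  refine Nat.eq_zero_of_le_zero ((scoreM_le_degIn _ S w t₀).trans_eq (degIn_eq_zero ?_))
  intro b _ h
  rw [cliquePendantHistory, Function.update_self, SimpleGraph.edge_adj] at h
  tauto

lemma IsScoreMPeeling.mem_of_cliquePendantHistory {S : ℕ → Finset (Fin n)} {p : ℕ → Fin n}
    (hP : IsScoreMPeeling (cliquePendantHistory t₀ u v) S p) (huv : u ≠ v) :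
    ∀ i ≤ n - 2, u ∈ S i ∧ v ∈ S i
  | 0, _ => by simp [hP.1]
  | i + 1, hi => by
    have : Nonempty (Fin τ) := ⟨t₀⟩
    obtain ⟨hu, hv⟩ := hP.mem_of_cliquePendantHistory huv i (by omega)
    obtain ⟨w, hw, hwuv⟩ := exists_mem_notMem_of_card_lt_card (s := {u, v}) (t := S i)
      (by rw [hP.card_eq i (by omega)]; have := card_le_two (a := u) (b := v); omega)
    simp only [mem_insert, mem_singleton, not_or] at hwuv
    have hw0 := scoreM_cliquePendantHistory_eq_zero (t₀ := t₀) (S i) hwuv.1 hwuv.2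
    refine ⟨hP.mem_succ (by omega) hu hw ?_, hP.mem_succ (by omega) hv hw ?_⟩
    · exact hw0 ▸ scoreM_pos hv (cliquePendantHistory_adj huv)
    · exact hw0 ▸ scoreM_pos hu fun t => (cliquePendantHistory_adj huv t).symm

lemma IsScoreMPeeling.fam_cliquePendantHistory_le_one {S : ℕ → Finset (Fin n)}
    {p : ℕ → Fin n} (hP : IsScoreMPeeling (cliquePendantHistory t₀ u v) S p) (huv : u ≠ v)
    {i : ℕ} (hi : i < n) : fam (cliquePendantHistory t₀ u v) (S i) ≤ 1 := by
  rcases le_or_gt i (n - 2) with hle | hgt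
  · refine (fam_le_of_degIn_le (k := 1) (hP.mem_of_cliquePendantHistory huv i hle).2
      fun t => ?_).trans_eq Nat.cast_one
    exact degIn_le_one_of_unique_neighbor (fun _ => eq_of_cliquePendantHistory_adj_pendant) _
  · have hcard : (S i).card = 1 := by rw [hP.card_eq i (by omega)]; omega
    obtain ⟨x, hx⟩ := card_eq_one.1 hcard
    rw [hx]
    exact (fam_le_of_degIn_le (k := 1) (mem_singleton_self x)
      fun t => (degIn_singleton_self _ x).trans_le zero_le_one).trans_eq Nat.cast_one

lemma degIn_cliqueWithPendant_erase {a : Fin n} (ha : a ∈ univ.erase v) :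
    degIn (cliqueWithPendant u v) (univ.erase v) a = n - 2 := by
  have hnbrs : (univ.erase v).filter (fun b => (cliqueWithPendant u v).Adj a b) =
      (univ.erase v).erase a := by
    ext b
    simp only [mem_filter, mem_erase, cliqueWithPendant, SimpleGraph.sup_adj,
      SimpleGraph.fromRel_adj, SimpleGraph.edge_adj] at ha ⊢
    tauto
  rw [degIn, hnbrs, card_erase_of_mem ha, card_erase_of_mem (mem_univ v), card_univ,
    Fintype.card_fin]
  omega

lemma fam_cliquePendantHistory_erase (huv : u ≠ v) :
    fam (cliquePendantHistory t₀ u v) (univ.erase v) = ((τ : ℝ) - 1) * (n - 2 : ℕ) / τ := by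
  have hu : u ∈ univ.erase v := mem_erase.2 ⟨huv, mem_univ u⟩
  refine fam_eq_of_minDensity_eq t₀ (Nat.eq_zero_of_le_zero ?_) fun t ht => ?_
  · refine (minDensity_le_degIn hu).trans_eq (degIn_eq_zero fun b hb h => ?_)
    rw [cliquePendantHistory, Function.update_self, SimpleGraph.edge_adj] at h
    simp only [mem_erase] at hb
    tauto
  · rw [cliquePendantHistory, Function.update_of_ne ht]
    exact minDensity_eq_of_forall_degIn_eq ⟨u, hu⟩ fun a ha => degIn_cliqueWithPendant_erase ha

end Construction

/-- For all `n ≥ 4`, `τ ≥ 2` there is a graph history on `n` vertices on which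
every `score_m` peeling chain only contains sets of `f_am`-value at most `1`, while some
nonempty set has `f_am`-value `(n-2)(τ-1)/τ`; hence `FindBFF_M` has approximation ratio
`O(1/n)` for the BFF-am problem. -/
theorem findBffM_bad_for_bff_am (n τ : ℕ) (hn : 4 ≤ n) (hτ : 2 ≤ τ) :
    ∃ G : Fin τ → SimpleGraph (Fin n),
      (∀ (S : ℕ → Finset (Fin n)) (v : ℕ → Fin n), IsScoreMPeeling G S v →
        ∀ i < n, fam G (S i) ≤ 1) ∧
      ∃ Sstar : Finset (Fin n), Sstar.Nonempty ∧
        fam G Sstar = ((n : ℝ) - 2) * ((τ : ℝ) - 1) / (τ : ℝ) := by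
  let u : Fin n := ⟨1, by omega⟩
  let v : Fin n := ⟨0, by omega⟩
  have huv : u ≠ v := by simp [u, v, Fin.ext_iff]
  refine ⟨cliquePendantHistory ⟨τ - 1, by omega⟩ u v,
    fun S p hP i hi => hP.fam_cliquePendantHistory_le_one huv hi,
    univ.erase v, ⟨u, mem_erase.2 ⟨huv, mem_univ u⟩⟩, ?_⟩
  rw [fam_cliquePendantHistory_erase huv, Nat.cast_sub (by omega)]
  push_cast
  ring
end
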